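/- Let X_1, …, X_N be finite spaces, μ_1, …, μ_N probability measures on X_1, …, X_N respectively, and c : X_1 × ⋯ × X_N → ℝ a real-valued cost function. Then a transport plan γ ∈ Π(μ_1,…,μ_N) is optimal if and only if its support is c-cyclically monotone in the multimarginal sense. -/

import Mathlib

/-!
Optimality gives cyclical monotonicity by perturbation: if `p₁, …, p_k` lie in the support and
the `q_i` are obtained from them by permuting coordinates, moving a small mass `ε` from the `p_i`
to the `q_i` keeps every marginal and changes the cost by `ε (∑ c (q_i) - ∑ c (p_i))`.

Conversely, the difference `d` of two plans with the same marginals has zero marginals and is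
nonnegative off the support `S` of the first one. If `d` is rational, scale it to integers and add
enough copies of every point of `S`: this writes two lists of points of the same length whose
coordinate multisets agree, so they differ by coordinatewise permutations and cyclical
monotonicity compares their costs. A real `d` is a limit of rational ones with the same sign
pattern, since the constraints are linear with rational coefficients and the rational solutions of
a rational linear system are dense in its real solutions.
-/

open MeasureTheory

/-- A set `Γ` is `c`-cyclically monotone in the multimarginal sense. -/
def MultiCCyclicallyMonotone {N : ℕ} {X : Fin (N + 1) → Type*}
    (c : (∀ j, X j) → ℝ) (Γ : Set (∀ j, X j)) : Prop :=
  ∀ (k : ℕ) (p : Fin k → ∀ j, X j), (∀ i, p i ∈ Γ) →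
    ∀ σ : Fin (N + 1) → Equiv.Perm (Fin k), σ 0 = 1 →
      ∑ i, c (p i) ≤ ∑ i, c (fun j => p (σ j i) j)

/-- The support of a measure on a finite space: the set of its atoms. -/
def measureSupport {Z : Type*} [MeasurableSpace Z] (γ : Measure Z) : Set Z :=
  {z | γ {z} ≠ 0}

open Finset Matrix Filter Topology

theorem exists_pos_nat_forall_mul_eq_intCast {ι : Type*} [Fintype ι] (d : ι → ℚ) :
    ∃ n : ℕ, 0 < n ∧ ∀ i, ∃ z : ℤ, (z : ℚ) = n * d i := by
  refine ⟨∏ i, (d i).den, prod_pos fun i _ => (d i).den_pos, fun i => ?_⟩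
  obtain ⟨m, hm⟩ := dvd_prod_of_mem (fun i => (d i).den) (mem_univ i)
  refine ⟨m * (d i).num, ?_⟩
  rw [hm]
  push_cast
  rw [mul_comm _ (m : ℚ), mul_assoc, Rat.den_mul_eq_num]

theorem exists_pos_forall_mul_le {ι : Type*} [Finite ι] {u v : ι → ℝ}
    (h : ∀ i, u i = 0 ∨ 0 < v i) (hv : 0 ≤ v) : ∃ ε > 0, ∀ i, ε * u i ≤ v i := by
  have : ∀ᶠ ε in 𝓝[>] (0 : ℝ), ∀ i, ε * u i ≤ v i := by
    refine eventually_all.2 fun i => (h i).elim (fun hu => by simpa [hu] using hv i) fun hvi => ?_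
    have : Tendsto (fun ε => ε * u i) (𝓝[>] 0) (𝓝 0) := by
      simpa using ((continuous_mul_const (u i)).tendsto 0).mono_left nhdsWithin_le_nhds
    exact (this.eventually_lt_const hvi).mono fun _ => le_of_lt
  exact (this.and self_mem_nhdsWithin).exists.imp fun ε h => ⟨h.2, h.1⟩

theorem Equiv.Perm.exists_comp_eq_of_card_fiber_eq {α β : Type*} [Fintype α] [DecidableEq β]
    {f g : α → β} (h : ∀ y, #{a | f a = y} = #{a | g a = y}) :
    ∃ σ : Equiv.Perm α, ∀ a, g (σ a) = f a :=
  ⟨Equiv.ofFiberEquiv fun y => Fintype.equivOfCardEq <| by simpa [Fintype.card_subtype] using h y,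
    Equiv.ofFiberEquiv_map _⟩

theorem Fintype.exists_fin_card_fiber_eq {Z : Type*} [Fintype Z] [DecidableEq Z] (a : Z → ℕ)
    {n : ℕ} (hn : ∑ x, a x = n) : ∃ p : Fin n → Z, ∀ x, #{i | p i = x} = a x := by
  let e := Fintype.equivFinOfCardEq (by simpa using hn : Fintype.card (Σ x, Fin (a x)) = n)
  refine ⟨fun i => (e.symm i).1, fun x => ?_⟩
  rw [Finset.card_equiv e.symm (t := {s | s.1 = x}) (by simp), card_filter, Fintype.sum_sigma]
  simp [apply_ite Finset.card]

theorem Fintype.sum_comp_eq_sum_card_fiber_mul {ι Z : Type*} [Fintype ι] [Fintype Z] [DecidableEq Z]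
    (p : ι → Z) (f : Z → ℝ) : ∑ i, f (p i) = ∑ x, (#{i | p i = x} : ℝ) * f x := by
  rw [← Finset.sum_fiberwise univ p]
  refine Finset.sum_congr rfl fun x _ => ?_
  rw [Finset.sum_congr rfl fun i hi => by rw [(mem_filter.mp hi).2], sum_const, nsmul_eq_mul]

theorem Matrix.exists_mul_mul_self {K m n : Type*} [Field K] [Fintype m] [Fintype n]
    [DecidableEq m] [DecidableEq n] (A : Matrix m n K) : ∃ B : Matrix n m K, A * B * A = A := by
  set f := Matrix.toLin' A
  obtain ⟨g, hg⟩ := f.rangeRestrict.exists_rightInverse_of_surjective f.range_rangeRestrict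
  obtain ⟨h, hh⟩ := LinearMap.exists_extend g
  refine ⟨LinearMap.toMatrix' h, Matrix.toLin'.injective <| LinearMap.ext fun v => ?_⟩
  have hfv : h (f v) = g (f.rangeRestrict v) := congr($hh (f.rangeRestrict v))
  rw [Matrix.toLin'_mul, Matrix.toLin'_mul, Matrix.toLin'_toMatrix']
  change f (h (f v)) = f v
  rw [hfv]
  exact congr(Subtype.val ($hg (f.rangeRestrict v)))

theorem Matrix.mem_closure_ratCast_image_ker {m n : Type*} [Fintype m] [Fintype n]
    [DecidableEq m] [DecidableEq n] (A : Matrix m n ℚ) {x : n → ℝ}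
    (hx : A.map (↑) *ᵥ x = 0) :
    x ∈ closure ((fun q i => (q i : ℝ)) '' {q : n → ℚ | A *ᵥ q = 0}) := by
  obtain ⟨B, hB⟩ := A.exists_mul_mul_self
  -- `P` maps rational vectors into the rational kernel and fixes the real kernel.
  set P := 1 - B * A
  have hAP : A * P = 0 := by simp [P, Matrix.mul_sub, ← Matrix.mul_assoc, hB]
  have hPx : P.map (Rat.castHom ℝ) *ᵥ x = x := by
    rw [Matrix.map_sub, Matrix.map_one, Matrix.map_mul, Matrix.sub_mulVec,
      ← Matrix.mulVec_mulVec, Matrix.one_mulVec] <;> simp_all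
  have hdense : Dense (Set.range fun (q : n → ℚ) i => (q i : ℝ)) :=
    DenseRange.piMap fun _ => Rat.denseRange_cast
  have := (continuous_const.matrix_mulVec continuous_id).range_subset_closure_image_dense
    hdense ⟨x, hPx⟩
  refine closure_mono ?_ this
  rintro _ ⟨_, ⟨q, rfl⟩, rfl⟩
  refine ⟨P *ᵥ q, by simp [Matrix.mulVec_mulVec, hAP], funext fun i => ?_⟩
  exact (Rat.castHom ℝ).map_mulVec P q i

section Marginal

variable {N : ℕ} {X : Fin (N + 1) → Type*} [∀ j, DecidableEq (X j)]

def marginalEvalMatrix (R : Type*) [Zero R] [One R] (F : Set (∀ j, X j)) :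
    Matrix ((Σ j, X j) ⊕ F) (∀ j, X j) R :=
  Matrix.fromRows (Matrix.of fun jy x => if x jy.1 = jy.2 then 1 else 0)
    (Matrix.of fun z x => if x = z.1 then 1 else 0)

theorem marginalEvalMatrix_map {R S : Type*} [Semiring R] [Semiring S] (f : R →+* S)
    (F : Set (∀ j, X j)) : (marginalEvalMatrix R F).map f = marginalEvalMatrix S F := by
  rw [marginalEvalMatrix, fromRows_map]
  congr <;> ext <;> simp [apply_ite f]

variable [∀ j, Fintype (X j)]

def marginal (R : Type*) [Semiring R] :
    ((∀ j, X j) → R) →ₗ[R] ((j : Fin (N + 1)) → X j → R) where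
  toFun w j y := ∑ x with x j = y, w x
  map_add' _ _ := by ext; simp [sum_add_distrib]
  map_smul' _ _ := by ext; simp [mul_sum]

theorem marginal_apply {R : Type*} [Semiring R] (w : (∀ j, X j) → R) (j : Fin (N + 1)) (y : X j) :
    marginal R w j y = ∑ x with x j = y, w x := rfl

theorem sum_marginal {R : Type*} [Semiring R] (w : (∀ j, X j) → R) (j : Fin (N + 1)) :
    ∑ y, marginal R w j y = ∑ x, w x :=
  sum_fiberwise univ (· j) w

theorem marginal_card_fiber {ι : Type*} [Fintype ι] (p : ι → ∀ j, X j) (j : Fin (N + 1)) (y : X j) :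
    marginal ℕ (fun x => #{i | p i = x}) j y = #{i | p i j = y} := by
  rw [marginal_apply, card_eq_sum_card_fiberwise (f := p) (t := {x | x j = y})
    (fun i hi => by simpa using hi)]
  refine sum_congr rfl fun x hx => congrArg card ?_
  ext i
  simp only [mem_filter, mem_univ, true_and] at hx ⊢
  exact ⟨fun h => ⟨h ▸ hx, h⟩, fun h => h.2⟩

theorem marginalEvalMatrix_mulVec_eq_zero_iff {R : Type*} [Semiring R] {F : Set (∀ j, X j)}
    {w : (∀ j, X j) → R} :
    marginalEvalMatrix R F *ᵥ w = 0 ↔ marginal R w = 0 ∧ ∀ x ∈ F, w x = 0 := by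
  have hrows : (of fun (jy : Σ j, X j) (x : ∀ j, X j) => if x jy.1 = jy.2 then (1 : R) else 0) *ᵥ w
      = fun jy => marginal R w jy.1 jy.2 := by
    ext; simp [mulVec, dotProduct, marginal_apply, sum_filter]
  have hevals : (of fun (z : F) (x : ∀ j, X j) => if x = z.1 then (1 : R) else 0) *ᵥ w
      = fun z : F => w z := by
    ext; simp [mulVec, dotProduct]
  rw [marginalEvalMatrix, fromRows_mulVec, hrows, hevals]
  simp [funext_iff, Sum.forall, Sigma.forall]

end Marginal

namespace MultiCCyclicallyMonotone

variable {N : ℕ} {X : Fin (N + 1) → Type*} [∀ j, DecidableEq (X j)]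
  {c : (∀ j, X j) → ℝ} {S : Set (∀ j, X j)}

theorem sum_le_sum_of_card_fiber_eq (hS : MultiCCyclicallyMonotone c S) {k : ℕ}
    {p q : Fin k → ∀ j, X j} (hp : ∀ i, p i ∈ S)
    (hpq : ∀ j y, #{i | p i j = y} = #{i | q i j = y}) :
    ∑ i, c (p i) ≤ ∑ i, c (q i) := by
  choose τ hτ using fun j =>
    Equiv.Perm.exists_comp_eq_of_card_fiber_eq (f := (q · j)) (g := (p · j)) fun y => (hpq j y).symm
  calc ∑ i, c (p i) ≤ ∑ i, c (fun j => p ((τ j * (τ 0)⁻¹) i) j) :=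
        hS k p hp _ (mul_inv_cancel (τ 0))
    _ = ∑ i, c (q ((τ 0)⁻¹ i)) := by simp [hτ]
    _ = ∑ i, c (q i) := Equiv.sum_comp _ (fun i => c (q i))

variable [∀ j, Fintype (X j)]

theorem sum_nat_mul_le (hS : MultiCCyclicallyMonotone c S) {a b : (∀ j, X j) → ℕ}
    (ha : ∀ x, a x ≠ 0 → x ∈ S) (hab : marginal ℕ a = marginal ℕ b) :
    ∑ x, (a x : ℝ) * c x ≤ ∑ x, (b x : ℝ) * c x := by
  have hsum : ∑ x, b x = ∑ x, a x := by simp only [← sum_marginal _ 0, hab]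
  obtain ⟨p, hp⟩ := Fintype.exists_fin_card_fiber_eq a rfl
  obtain ⟨q, hq⟩ := Fintype.exists_fin_card_fiber_eq b hsum
  have hpS : ∀ i, p i ∈ S := fun i => ha _ (hp (p i) ▸ card_ne_zero.2 ⟨i, by simp⟩)
  have hpq : ∀ j y, #{i | p i j = y} = #{i | q i j = y} := fun j y => by
    simp only [← marginal_card_fiber, hp, hq, hab]
  simpa only [Fintype.sum_comp_eq_sum_card_fiber_mul, hp, hq] using
    hS.sum_le_sum_of_card_fiber_eq hpS hpq

theorem sum_int_mul_nonneg (hS : MultiCCyclicallyMonotone c S) {e : (∀ j, X j) → ℤ}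
    (he : marginal ℤ e = 0) (heS : ∀ x ∉ S, 0 ≤ e x) : 0 ≤ ∑ x, (e x : ℝ) * c x := by
  classical
  let M := ∑ x, (e x).natAbs
  let a : (∀ j, X j) → ℕ := fun x => if x ∈ S then M else 0
  have hae : ∀ x, 0 ≤ (a x : ℤ) + e x := fun x => by
    by_cases hx : x ∈ S
    · have : (e x).natAbs ≤ M := single_le_sum (fun x _ => (e x).natAbs.zero_le) (mem_univ x)
      simp only [a, if_pos hx]; omega
    · simpa [a, hx] using heS x hx
  let b : (∀ j, X j) → ℕ := fun x => ((a x : ℤ) + e x).toNat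
  have hb : ∀ x, (b x : ℝ) = a x + e x := fun x => by exact_mod_cast Int.toNat_of_nonneg (hae x)
  have hab : marginal ℕ a = marginal ℕ b := by
    ext j y
    apply Nat.cast_injective (R := ℤ)
    have he' : ∑ x with x j = y, e x = 0 := congr_fun₂ he j y
    simp only [marginal_apply, Nat.cast_sum, b, Int.toNat_of_nonneg (hae _), sum_add_distrib, he',
      add_zero]
  have := hS.sum_nat_mul_le (fun x hx => by_contra fun h => hx (if_neg h)) hab
  simp only [hb, add_mul, sum_add_distrib] at this
  linarith

theorem sum_rat_mul_nonneg (hS : MultiCCyclicallyMonotone c S) {d : (∀ j, X j) → ℚ}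
    (hd : marginal ℚ d = 0) (hdS : ∀ x ∉ S, 0 ≤ d x) : 0 ≤ ∑ x, (d x : ℝ) * c x := by
  obtain ⟨n, hn, he⟩ := exists_pos_nat_forall_mul_eq_intCast d
  choose e he using he
  have hmarg : marginal ℤ e = 0 := by
    ext j y
    apply Int.cast_injective (α := ℚ)
    have hd' : ∑ x with x j = y, d x = 0 := congr_fun₂ hd j y
    simp [marginal_apply, he, ← mul_sum, hd']
  have hsum := hS.sum_int_mul_nonneg hmarg fun x hx => by
    exact_mod_cast (he x).symm ▸ mul_nonneg n.cast_nonneg (hdS x hx)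
  have hcast : ∀ x, (e x : ℝ) = n * d x := fun x => by exact_mod_cast he x
  simp only [hcast, mul_assoc, ← mul_sum] at hsum
  exact nonneg_of_mul_nonneg_right hsum (by exact_mod_cast hn)

theorem sum_mul_nonneg (hS : MultiCCyclicallyMonotone c S) {d : (∀ j, X j) → ℝ}
    (hd : marginal ℝ d = 0) (hdS : ∀ x ∉ S, 0 ≤ d x) : 0 ≤ ∑ x, d x * c x := by
  classical
  -- Rational solutions near `d` that vanish on `F` are nonnegative off `S`, like `d`.
  let F := {x | x ∉ S ∧ d x = 0}
  have hdF : (marginalEvalMatrix ℚ F).map (Rat.castHom ℝ) *ᵥ d = 0 := by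
    rw [marginalEvalMatrix_map, marginalEvalMatrix_mulVec_eq_zero_iff]
    exact ⟨hd, fun x hx => hx.2⟩
  let U := Set.pi {x | x ∉ S ∧ 0 < d x} fun _ => Set.Ioi (0 : ℝ)
  have hU : IsOpen U := isOpen_set_pi (Set.toFinite _) fun _ _ => isOpen_Ioi
  refine closure_minimal ?_ (isClosed_le continuous_const
    (continuous_finsetSum _ fun x _ => (continuous_apply x).mul continuous_const))
    (hU.inter_closure ⟨fun x hx => hx.2, Matrix.mem_closure_ratCast_image_ker _ hdF⟩)
  rintro _ ⟨hqU, q, hq, rfl⟩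
  replace hq := marginalEvalMatrix_mulVec_eq_zero_iff.1 hq
  refine hS.sum_rat_mul_nonneg hq.1 fun x hx => (hdS x hx).eq_or_lt.elim
    (fun h => (hq.2 x ⟨hx, h.symm⟩).ge) fun h => ?_
  exact_mod_cast (show (0 : ℝ) < q x from hqU x ⟨hx, h⟩).le

end MultiCCyclicallyMonotone

section Weights

variable {N : ℕ} {X : Fin (N + 1) → Type*} [∀ j, Fintype (X j)] [∀ j, DecidableEq (X j)]
  {c : (∀ j, X j) → ℝ}

theorem multiCCyclicallyMonotone_of_forall_sum_mul_le {a : (∀ j, X j) → ℝ} (ha : 0 ≤ a)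
    (hmin : ∀ b, 0 ≤ b → marginal ℝ b = marginal ℝ a → ∑ x, a x * c x ≤ ∑ x, b x * c x) :
    MultiCCyclicallyMonotone c {x | a x ≠ 0} := by
  intro k p hp σ _
  set q : Fin k → ∀ j, X j := fun i j => p (σ j i) j
  let δ : (∀ j, X j) → ℝ := fun x => (#{i | q i = x} : ℝ) - #{i | p i = x}
  have hδ : marginal ℝ δ = 0 := by
    ext j y
    have hq : #{i | q i j = y} = #{i | p i j = y} :=
      card_equiv (σ j) fun i => by simp [q]
    have h := congrArg (Nat.cast (R := ℝ)) ((marginal_card_fiber q j y).trans hq)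
    rw [← marginal_card_fiber p] at h
    simpa [δ, marginal_apply, sub_eq_zero] using h
  have hpa : ∀ x, (#{i | p i = x} : ℝ) = 0 ∨ 0 < a x := fun x => by
    refine or_iff_not_imp_left.2 fun hx => ?_
    obtain ⟨i, hi⟩ := card_ne_zero.1 (Nat.cast_ne_zero.1 hx)
    exact (ha x).lt_of_ne' ((mem_filter.1 hi).2 ▸ hp i)
  obtain ⟨ε, hε, hεa⟩ := exists_pos_forall_mul_le hpa ha
  have hb : 0 ≤ a + ε • δ := fun x => by
    have := hεa x
    have := mul_nonneg hε.le (#{i | q i = x}).cast_nonneg (α := ℝ)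
    simp only [Pi.add_apply, Pi.smul_apply, smul_eq_mul, δ, Pi.zero_apply, mul_sub]
    linarith
  have hcost := hmin _ hb (by rw [map_add, map_smul, hδ, smul_zero, add_zero])
  have hδc : ∑ x, δ x * c x = ∑ i, c (q i) - ∑ i, c (p i) := by
    simp only [δ, sub_mul, sum_sub_distrib, Fintype.sum_comp_eq_sum_card_fiber_mul]
  simp only [Pi.add_apply, Pi.smul_apply, smul_eq_mul, add_mul, sum_add_distrib, mul_assoc,
    ← mul_sum, hδc] at hcost
  linarith [nonneg_of_mul_nonneg_right (by linarith : 0 ≤ ε * (∑ i, c (q i) - ∑ i, c (p i))) hε]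

theorem forall_sum_mul_le_iff_multiCCyclicallyMonotone {a : (∀ j, X j) → ℝ} (ha : 0 ≤ a) :
    (∀ b, 0 ≤ b → marginal ℝ b = marginal ℝ a → ∑ x, a x * c x ≤ ∑ x, b x * c x) ↔
      MultiCCyclicallyMonotone c {x | a x ≠ 0} := by
  refine ⟨multiCCyclicallyMonotone_of_forall_sum_mul_le ha, fun hS b hb hba => ?_⟩
  have := hS.sum_mul_nonneg (d := b - a) (by rw [map_sub, hba, sub_self]) fun x hx => by
    simpa [not_not.1 hx] using hb x
  simpa [sub_mul, sum_sub_distrib] using this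

end Weights

section FiniteMeasure

variable {Z : Type*} [Fintype Z] [MeasurableSpace Z] [MeasurableSingletonClass Z]

theorem measureReal_map_singleton_eq_sum {W : Type*} [MeasurableSpace W]
    [MeasurableSingletonClass W] [DecidableEq W] (ν : Measure Z) [IsFiniteMeasure ν]
    {f : Z → W} (hf : Measurable f) (y : W) :
    (ν.map f).real {y} = ∑ x with f x = y, ν.real {x} := by
  rw [map_measureReal_apply hf (measurableSet_singleton y), sum_measureReal_singleton]
  congr 1
  ext
  simp

theorem exists_measureReal_singleton_eq {w : Z → ℝ} (hw : 0 ≤ w) :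
    ∃ ν : Measure Z, IsFiniteMeasure ν ∧ ∀ x, ν.real {x} = w x := by
  classical
  refine ⟨∑ x, (w x).toNNReal • Measure.dirac x, inferInstance, fun x => ?_⟩
  simpa [measureReal_def, Set.indicator] using hw x

end FiniteMeasure

/-- In finite spaces, for a real-valued cost, a multimarginal transport plan is optimal
if and only if its support is `c`-cyclically monotone. -/
theorem optimal_iff_multiCCyclicallyMonotone_of_finite_spaces
    {N : ℕ} {X : Fin (N + 1) → Type*}
    [∀ i, Fintype (X i)]
    [∀ i, MeasurableSpace (X i)] [∀ i, MeasurableSingletonClass (X i)]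
    (μ : ∀ i, Measure (X i)) [∀ i, IsProbabilityMeasure (μ i)]
    (c : (∀ i, X i) → ℝ)
    (γ : Measure (∀ i, X i))
    (hγ : ∀ i, γ.map (fun x => x i) = μ i) :
    (∀ γ' : Measure (∀ i, X i), (∀ i, γ'.map (fun x => x i) = μ i) →
        ∫ x, c x ∂γ ≤ ∫ x, c x ∂γ') ↔
      MultiCCyclicallyMonotone c (measureSupport γ) := by
  classical
  have hprob : ∀ ν : Measure (∀ i, X i), (∀ i, ν.map (· i) = μ i) → IsProbabilityMeasure ν :=
    fun ν hν => (Measure.isProbabilityMeasure_map_iff (measurable_pi_apply 0).aemeasurable).1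
      (hν 0 ▸ inferInstance)
  have := hprob γ hγ
  have hcost : ∀ (ν : Measure (∀ i, X i)) [IsFiniteMeasure ν],
      ∫ x, c x ∂ν = ∑ x, ν.real {x} * c x := fun ν _ => integral_fintype Integrable.of_finite
  have hmarg : ∀ (ν : Measure (∀ i, X i)) [IsFiniteMeasure ν], (∀ i, ν.map (· i) = μ i) ↔
      marginal ℝ (fun x => ν.real {x}) = marginal ℝ (fun x => γ.real {x}) := fun ν _ => by
    simp only [← hγ, ext_iff_measureReal_singleton, funext_iff,
      measureReal_map_singleton_eq_sum _ (measurable_pi_apply _), marginal_apply]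
  have hsupp : measureSupport γ = {x | γ.real {x} ≠ 0} := by
    ext; simp [measureSupport, measureReal_eq_zero_iff]
  rw [hsupp, ← forall_sum_mul_le_iff_multiCCyclicallyMonotone fun _ => measureReal_nonneg]
  constructor
  · intro hopt b hb hbγ
    obtain ⟨ν, _, hνb⟩ := exists_measureReal_singleton_eq hb
    simpa [hcost, hνb] using hopt ν ((hmarg ν).2 (by simpa [hνb] using hbγ))
  · intro hmin ν hν
    have := hprob ν hν
    simpa [hcost] using hmin _ (fun _ => measureReal_nonneg) ((hmarg ν).1 hν)
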